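/- arXiv:2010.13882 — 4 statements merged into one kernel-verified Lean document; each statement's English description precedes it below -/
import Mathlib

section
/- Let f : ℝ³ → ℝ be a nonnegative measurable function with f(x) ≤ C/(1 + |x|⁴) for all x and 0 < ∫ f(x) dx =: σ⁻¹. Then for all x, σ · (f ∗ f)(x) ≤ C/(1 + |x/2|⁴), with the same constant C. -/
open MeasureTheory

theorem stmt_0 (C σ : ℝ) (f : EuclideanSpace ℝ (Fin 3) → ℝ)
    (hmeas : Measurable f) (hnonneg : ∀ x, 0 ≤ f x)
    (hbound : ∀ x, f x ≤ C / (1 + ‖x‖ ^ 4))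
    (hpos : 0 < ∫ x, f x) (hσ : σ⁻¹ = ∫ x, f x) :
    ∀ x, σ * ∫ y, f (x - y) * f y ≤ C / (1 + (‖x‖ / 2) ^ 4) := by
  -- C is nonnegative
  have hC : 0 ≤ C := by
    have h0 := (hnonneg 0).trans (hbound 0)
    have h1 : (0:ℝ) < 1 + ‖(0 : EuclideanSpace ℝ (Fin 3))‖ ^ 4 := by positivity
    have := (le_div_iff₀ h1).mp h0
    simpa using this
  -- the bound (1 + ‖z‖^4) * f z ≤ C
  have hbound' : ∀ z : EuclideanSpace ℝ (Fin 3), (1 + ‖z‖ ^ 4) * f z ≤ C := by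
    intro z
    have h1 : (0:ℝ) < 1 + ‖z‖ ^ 4 := by positivity
    have h2 := (le_div_iff₀ h1).mp (hbound z)
    linarith [h2, mul_comm (f z) (1 + ‖z‖ ^ 4)]
  -- f is integrable
  have hintf : Integrable f := by
    have hmaj : Integrable (fun z : EuclideanSpace ℝ (Fin 3) =>
        8 * C * (1 + ‖z‖) ^ (-(4:ℝ))) :=
      (integrable_one_add_norm (by simp [finrank_euclideanSpace]; norm_num)).const_mul _
    refine hmaj.mono' hmeas.aestronglyMeasurable (Filter.Eventually.of_forall fun z => ?_)
    have hz : (0:ℝ) ≤ ‖z‖ := norm_nonneg z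
    have h1 : (0:ℝ) < 1 + ‖z‖ ^ 4 := by positivity
    have h2 : (0:ℝ) < 1 + ‖z‖ := by positivity
    rw [Real.norm_eq_abs, abs_of_nonneg (hnonneg z)]
    have hr : (1 + ‖z‖) ^ (-(4:ℝ)) = ((1 + ‖z‖) ^ (4:ℕ))⁻¹ := by
      rw [Real.rpow_neg h2.le, show ((4:ℝ) = ((4:ℕ):ℝ)) by norm_num, Real.rpow_natCast]
    rw [hr]
    have h3 : (1 + ‖z‖) ^ (4:ℕ) ≤ 8 * (1 + ‖z‖ ^ 4) := by
      nlinarith [sq_nonneg (1 - ‖z‖), sq_nonneg (1 - ‖z‖ ^ 2), sq_nonneg (‖z‖ - ‖z‖ ^ 2)]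
    have h4 : (0:ℝ) < (1 + ‖z‖) ^ (4:ℕ) := by positivity
    calc f z ≤ C / (1 + ‖z‖ ^ 4) := hbound z
      _ ≤ 8 * C / (1 + ‖z‖) ^ (4:ℕ) := by
          rw [div_le_div_iff₀ h1 h4]; nlinarith
      _ = 8 * C * ((1 + ‖z‖) ^ (4:ℕ))⁻¹ := by ring
  intro x
  set K : ℝ := 1 + (‖x‖ / 2) ^ 4 with hK
  have hKpos : 0 < K := by positivity
  -- pointwise inequality
  have hpt : ∀ y : EuclideanSpace ℝ (Fin 3),
      2 * K * (f (x - y) * f y) ≤ C * (f (x - y) + f y) := by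
    intro y
    have ha : (0:ℝ) ≤ ‖x - y‖ := norm_nonneg _
    have hb : (0:ℝ) ≤ ‖y‖ := norm_nonneg _
    have htri : ‖x‖ ≤ ‖x - y‖ + ‖y‖ := by
      have h := norm_add_le (x - y) y
      rwa [sub_add_cancel] at h
    have hxn : (0:ℝ) ≤ ‖x‖ := norm_nonneg _
    have hkey : 2 * K ≤ 2 + ‖x - y‖ ^ 4 + ‖y‖ ^ 4 := by
      rw [hK]
      nlinarith [pow_le_pow_left₀ hxn htri 4, sq_nonneg (‖x - y‖ - ‖y‖),
        sq_nonneg (‖x - y‖ + ‖y‖), sq_nonneg (‖x - y‖ ^ 2 - ‖y‖ ^ 2),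
        mul_nonneg ha hb, sq_nonneg (‖x-y‖^2 + ‖y‖^2)]
    have h1 := hbound' (x - y)
    have h2 := hbound' y
    have hu := hnonneg (x - y)
    have hv := hnonneg y
    nlinarith [mul_le_mul_of_nonneg_right h1 hv, mul_le_mul_of_nonneg_right h2 hu,
      mul_nonneg (mul_nonneg hu hv) (by linarith : (0:ℝ) ≤ 2 + ‖x - y‖ ^ 4 + ‖y‖ ^ 4 - 2 * K)]
  -- integrate
  have hintfx : Integrable (fun y => f (x - y)) := hintf.comp_sub_left x
  have hintRHS : Integrable (fun y => C * (f (x - y) + f y)) := ((hintfx.add hintf).const_mul C)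
  have hmono : (∫ y, 2 * K * (f (x - y) * f y)) ≤ ∫ y, C * (f (x - y) + f y) := by
    refine integral_mono_of_nonneg (Filter.Eventually.of_forall fun y => ?_) hintRHS
      (Filter.Eventually.of_forall fun y => hpt y)
    exact mul_nonneg (by positivity) (mul_nonneg (hnonneg _) (hnonneg _))
  rw [integral_const_mul] at hmono
  have hRHS : (∫ y, C * (f (x - y) + f y)) = 2 * C * ∫ z, f z := by
    rw [integral_const_mul, integral_add hintfx hintf, integral_sub_left_eq_self f _ x]
    ring
  rw [hRHS] at hmono
  -- conclude
  have hσpos : 0 < σ := by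
    have : 0 < σ⁻¹ := hσ ▸ hpos
    exact inv_pos.mp this
  have hσint : σ * ∫ z, f z = 1 := by
    rw [← hσ]; field_simp
  have hI : (∫ y, f (x - y) * f y) ≤ C * (∫ z, f z) / K := by
    rw [le_div_iff₀ hKpos]
    nlinarith [hmono]
  calc σ * ∫ y, f (x - y) * f y ≤ σ * (C * (∫ z, f z) / K) := by
        exact mul_le_mul_of_nonneg_left hI hσpos.le
    _ = C / K * (σ * ∫ z, f z) := by ring
    _ = C / K := by rw [hσint, mul_one]
end

section
/- For u(x) = c/(1 + b²|x|²)² on ℝ³ with b, c > 0, the convolution satisfies (u ∗ u)(x) = 2π²c²/(b³ (4 + b²|x|²)²) for all x. -/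
/-!
After scaling out `b` and `c` it remains to compute
`I(w) = ∫ ((1 + |w - z|²)² (1 + |z|²)²)⁻¹ dz` over `ℝ³`. By rotation invariance `w` lies on the
first axis at distance `r = |w|`, and Fubini splits `z = (y, v)` with `y ∈ ℝ`, `v ∈ ℝ²`. For fixed
`v`, with `t² = 1 + |v|²`, the `y`-integral is
`∫ ((t² + (y - r)²)² (t² + y²)²)⁻¹ dy = π (20t² + r²) / (t³ (4t² + r²)³)`, obtained from an
explicit partial-fraction primitive when `r ≠ 0` and by continuity in `r` at `r = 0`. The
remaining integral over `v ∈ ℝ²` is radial; in polar coordinates it has the primitive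
`-π / (t (4t² + r²)²)`.
-/

open MeasureTheory Real Filter Set Topology

lemma tendsto_inv_sq_add_sq_cocompact (t : ℝ) :
    Tendsto (fun x : ℝ => (t ^ 2 + x ^ 2)⁻¹) (cocompact ℝ) (𝓝 0) := by
  refine squeeze_zero_norm' ?_ (tendsto_inv_atTop_zero.comp tendsto_norm_cocompact_atTop)
  filter_upwards [tendsto_norm_cocompact_atTop.eventually_ge_atTop 1] with x hx
  rw [Real.norm_eq_abs] at hx
  have hx0 : x ≠ 0 := by rintro rfl; norm_num at hx
  rw [Function.comp_apply, Real.norm_eq_abs, Real.norm_eq_abs, abs_inv, abs_of_pos (by positivity)]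
  gcongr
  nlinarith [sq_abs x, sq_nonneg t]

lemma tendsto_div_sq_add_sq_cocompact (t : ℝ) :
    Tendsto (fun x : ℝ => x / (t ^ 2 + x ^ 2)) (cocompact ℝ) (𝓝 0) := by
  refine squeeze_zero_norm' ?_ (tendsto_inv_atTop_zero.comp tendsto_norm_cocompact_atTop)
  filter_upwards [tendsto_norm_cocompact_atTop.eventually_ge_atTop 1] with x hx
  rw [Real.norm_eq_abs] at hx
  have hx0 : x ≠ 0 := by rintro rfl; norm_num at hx
  have hB : 0 < t ^ 2 + x ^ 2 := by positivity
  rw [Function.comp_apply, Real.norm_eq_abs, Real.norm_eq_abs, abs_div, abs_of_pos hB,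
    div_le_iff₀ hB, ← div_eq_inv_mul, le_div_iff₀ (by positivity)]
  nlinarith [sq_abs x, sq_nonneg t]

lemma tendsto_sub_const_cocompact (a : ℝ) :
    Tendsto (fun y : ℝ => y - a) (cocompact ℝ) (cocompact ℝ) :=
  (Homeomorph.subRight a).map_cocompact.le

lemma tendsto_log_sub_log_cocompact {t : ℝ} (ht : t ≠ 0) (a : ℝ) :
    Tendsto (fun y : ℝ => log (t ^ 2 + (y - a) ^ 2) - log (t ^ 2 + y ^ 2)) (cocompact ℝ) (𝓝 0) := by
  have hratio : Tendsto
      (fun y : ℝ => 1 + (a ^ 2 * (t ^ 2 + y ^ 2)⁻¹ - 2 * a * (y / (t ^ 2 + y ^ 2))))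
      (cocompact ℝ) (𝓝 1) := by
    simpa using tendsto_const_nhds.add (((tendsto_inv_sq_add_sq_cocompact t).const_mul (a ^ 2)).sub
      ((tendsto_div_sq_add_sq_cocompact t).const_mul (2 * a)))
  have hlog := (continuousAt_log one_ne_zero).tendsto.comp hratio
  rw [log_one] at hlog
  refine hlog.congr fun y => ?_
  have hA : 0 < t ^ 2 + (y - a) ^ 2 := by positivity
  have hB : 0 < t ^ 2 + y ^ 2 := by positivity
  rw [Function.comp_apply, ← log_div hA.ne' hB.ne']
  congr 1
  field_simp
  ring

lemma tendsto_arctan_sub_div_atTop (a : ℝ) {t : ℝ} (ht : 0 < t) :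
    Tendsto (fun y : ℝ => arctan ((y - a) / t)) atTop (𝓝 (π / 2)) :=
  (tendsto_arctan_atTop.mono_right nhdsWithin_le_nhds).comp
    ((tendsto_atTop_add_const_right _ (-a) tendsto_id).atTop_div_const ht)

lemma tendsto_arctan_sub_div_atBot (a : ℝ) {t : ℝ} (ht : 0 < t) :
    Tendsto (fun y : ℝ => arctan ((y - a) / t)) atBot (𝓝 (-(π / 2))) :=
  (tendsto_arctan_atBot.mono_right nhdsWithin_le_nhds).comp
    ((tendsto_atBot_add_const_right _ (-a) tendsto_id).atBot_div_const ht)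

/-- Obtained by partial fractions; the coefficients divide by `a`, so this is a primitive only
for `a ≠ 0`. -/
noncomputable def invSqMulSqPrimitive (t a y : ℝ) : ℝ :=
  -2 * (4 * t ^ 2 + 5 * a ^ 2) / (a ^ 3 * (4 * t ^ 2 + a ^ 2) ^ 3) *
      (log (t ^ 2 + (y - a) ^ 2) - log (t ^ 2 + y ^ 2))
    + 2 / (a * (4 * t ^ 2 + a ^ 2) ^ 2) * ((t ^ 2 + (y - a) ^ 2)⁻¹ - (t ^ 2 + y ^ 2)⁻¹)
    + (20 * t ^ 2 + a ^ 2) / (2 * t ^ 3 * (4 * t ^ 2 + a ^ 2) ^ 3) *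
      (arctan ((y - a) / t) + arctan (y / t))
    + (a ^ 2 - 4 * t ^ 2) / (2 * t ^ 2 * a ^ 2 * (4 * t ^ 2 + a ^ 2) ^ 2) *
      ((y - a) / (t ^ 2 + (y - a) ^ 2) + y / (t ^ 2 + y ^ 2))

lemma hasDerivAt_invSqMulSqPrimitive {t a : ℝ} (ht : t ≠ 0) (ha : a ≠ 0) (y : ℝ) :
    HasDerivAt (invSqMulSqPrimitive t a) ((t ^ 2 + (y - a) ^ 2) ^ 2 * (t ^ 2 + y ^ 2) ^ 2)⁻¹ y := by
  have hA : t ^ 2 + (y - a) ^ 2 ≠ 0 := by positivity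
  have hB : t ^ 2 + y ^ 2 ≠ 0 := by positivity
  have dA : HasDerivAt (fun y => t ^ 2 + (y - a) ^ 2) (2 * (y - a)) y := by
    simpa using (((hasDerivAt_id y).sub_const a).pow 2).const_add (t ^ 2)
  have dB : HasDerivAt (fun y => t ^ 2 + y ^ 2) (2 * y) y := by
    simpa using ((hasDerivAt_id y).pow 2).const_add (t ^ 2)
  have dLog := (dA.log hA).sub (dB.log hB)
  have dInv := (dA.inv hA).sub (dB.inv hB)
  have dArc := ((hasDerivAt_arctan ((y - a) / t)).comp y
      (((hasDerivAt_id y).sub_const a).div_const t)).add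
    ((hasDerivAt_arctan (y / t)).comp y ((hasDerivAt_id y).div_const t))
  have dFrac := (((hasDerivAt_id y).sub_const a).div dA hA).add ((hasDerivAt_id y).div dB hB)
  refine ((((dLog.const_mul _).add (dInv.const_mul _)).add (dArc.const_mul _)).add
    (dFrac.const_mul _)).congr_deriv ?_
  simp only [id]
  field_simp
  ring

lemma tendsto_invSqMulSqPrimitive {t a L : ℝ} (ht : 0 < t) {l : Filter ℝ} (hl : l ≤ cocompact ℝ)
    (h₁ : Tendsto (fun y => arctan ((y - a) / t)) l (𝓝 L))
    (h₂ : Tendsto (fun y => arctan (y / t)) l (𝓝 L)) :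
    Tendsto (invSqMulSqPrimitive t a) l
      (𝓝 ((20 * t ^ 2 + a ^ 2) / (2 * t ^ 3 * (4 * t ^ 2 + a ^ 2) ^ 3) * (2 * L))) := by
  have hShift := tendsto_sub_const_cocompact a
  have hLog := (tendsto_log_sub_log_cocompact ht.ne' a).mono_left hl
  have hInv := (((tendsto_inv_sq_add_sq_cocompact t).comp hShift).sub
    (tendsto_inv_sq_add_sq_cocompact t)).mono_left hl
  have hFrac := (((tendsto_div_sq_add_sq_cocompact t).comp hShift).add
    (tendsto_div_sq_add_sq_cocompact t)).mono_left hl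
  convert ((((hLog.const_mul _).add (hInv.const_mul _)).add ((h₁.add h₂).const_mul _)).add
    (hFrac.const_mul _)) using 2
  · rfl
  · ring

lemma inv_sq_mul_sq_le {t : ℝ} (ht : t ≠ 0) (a y : ℝ) :
    ((t ^ 2 + (y - a) ^ 2) ^ 2 * (t ^ 2 + y ^ 2) ^ 2)⁻¹ ≤ (t ^ 6)⁻¹ * (t ^ 2 + y ^ 2)⁻¹ := by
  rw [← mul_inv]
  have hA : t ^ 2 ≤ t ^ 2 + (y - a) ^ 2 := by nlinarith [sq_nonneg (y - a)]
  have hB : t ^ 2 ≤ t ^ 2 + y ^ 2 := by nlinarith [sq_nonneg y]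
  refine inv_anti₀ (by positivity) ?_
  calc t ^ 6 * (t ^ 2 + y ^ 2) = (t ^ 2) ^ 2 * (t ^ 2 * (t ^ 2 + y ^ 2)) := by ring
    _ ≤ (t ^ 2 + (y - a) ^ 2) ^ 2 * ((t ^ 2 + y ^ 2) * (t ^ 2 + y ^ 2)) := by gcongr
    _ = _ := by ring

lemma integrable_inv_sq_add_sq {t : ℝ} (ht : t ≠ 0) :
    Integrable (fun y : ℝ => (t ^ 2 + y ^ 2)⁻¹) := by
  refine ((integrable_inv_one_add_sq.comp_div ht).const_mul (t ^ 2)⁻¹).congr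
    (.of_forall fun y => ?_)
  field_simp

lemma continuous_inv_sq_mul_sq {t : ℝ} (ht : t ≠ 0) :
    Continuous fun p : ℝ × ℝ => ((t ^ 2 + (p.2 - p.1) ^ 2) ^ 2 * (t ^ 2 + p.2 ^ 2) ^ 2)⁻¹ :=
  (by fun_prop : Continuous _).inv₀ fun p => by positivity

lemma integrable_inv_sq_mul_sq {t : ℝ} (ht : t ≠ 0) (a : ℝ) :
    Integrable fun y : ℝ => ((t ^ 2 + (y - a) ^ 2) ^ 2 * (t ^ 2 + y ^ 2) ^ 2)⁻¹ :=
  ((integrable_inv_sq_add_sq ht).const_mul _).mono'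
    ((continuous_inv_sq_mul_sq ht).comp (Continuous.prodMk_right a)).aestronglyMeasurable
    (.of_forall fun y => by
      rw [Real.norm_eq_abs, abs_of_pos (by positivity)]
      exact inv_sq_mul_sq_le ht a y)

lemma integral_inv_sq_mul_sq_of_ne_zero {t a : ℝ} (ht : 0 < t) (ha : a ≠ 0) :
    ∫ y, ((t ^ 2 + (y - a) ^ 2) ^ 2 * (t ^ 2 + y ^ 2) ^ 2)⁻¹
      = π * (20 * t ^ 2 + a ^ 2) / (t ^ 3 * (4 * t ^ 2 + a ^ 2) ^ 3) := by
  have hTop := tendsto_invSqMulSqPrimitive ht atTop_le_cocompact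
    (tendsto_arctan_sub_div_atTop a ht) (by simpa using tendsto_arctan_sub_div_atTop 0 ht)
  have hBot := tendsto_invSqMulSqPrimitive ht atBot_le_cocompact
    (tendsto_arctan_sub_div_atBot a ht) (by simpa using tendsto_arctan_sub_div_atBot 0 ht)
  rw [integral_of_hasDerivAt_of_tendsto (hasDerivAt_invSqMulSqPrimitive ht.ne' ha)
    (integrable_inv_sq_mul_sq ht.ne' a) hBot hTop]
  field_simp
  ring

lemma continuous_integral_inv_sq_mul_sq {t : ℝ} (ht : t ≠ 0) :
    Continuous fun a : ℝ => ∫ y, ((t ^ 2 + (y - a) ^ 2) ^ 2 * (t ^ 2 + y ^ 2) ^ 2)⁻¹ :=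
  continuous_of_dominated
    (fun a => ((continuous_inv_sq_mul_sq ht).comp (Continuous.prodMk_right a)).aestronglyMeasurable)
    (fun a => .of_forall fun y => by
      rw [Real.norm_eq_abs, abs_of_pos (by positivity)]
      exact inv_sq_mul_sq_le ht a y)
    ((integrable_inv_sq_add_sq ht).const_mul _)
    (.of_forall fun y => (continuous_inv_sq_mul_sq ht).comp (Continuous.prodMk_left y))

theorem integral_inv_sq_mul_sq {t : ℝ} (ht : 0 < t) (a : ℝ) :
    ∫ y, ((t ^ 2 + (y - a) ^ 2) ^ 2 * (t ^ 2 + y ^ 2) ^ 2)⁻¹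
      = π * (20 * t ^ 2 + a ^ 2) / (t ^ 3 * (4 * t ^ 2 + a ^ 2) ^ 3) := by
  refine congrFun (Continuous.ext_on (dense_compl_singleton 0)
    (continuous_integral_inv_sq_mul_sq ht.ne') ?_
    fun a ha => integral_inv_sq_mul_sq_of_ne_zero ht ha) a
  exact Continuous.div (by fun_prop) (by fun_prop) fun a => by positivity

lemma integral_prod_comp_sq_add_sq (F : ℝ → ℝ) :
    ∫ v : ℝ × ℝ, F (v.1 ^ 2 + v.2 ^ 2) = 2 * π * ∫ ρ in Ioi 0, ρ * F (ρ ^ 2) := by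
  rw [← integral_comp_polarCoord_symm]
  have hnorm (p : ℝ × ℝ) : (polarCoord.symm p).1 ^ 2 + (polarCoord.symm p).2 ^ 2 = p.1 ^ 2 := by
    simp only [polarCoord_symm_apply]
    linear_combination p.1 ^ 2 * sin_sq_add_cos_sq p.2
  simp only [hnorm, smul_eq_mul]
  rw [show polarCoord.target = Ioi 0 ×ˢ Ioo (-π) π from rfl, Measure.volume_eq_prod]
  have h := setIntegral_prod_mul (μ := volume) (ν := volume) (fun ρ => ρ * F (ρ ^ 2))
    (fun _ => (1 : ℝ)) (Ioi 0) (Ioo (-π) π)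
  simp only [mul_one] at h
  rw [h, setIntegral_const, Real.volume_real_Ioo_of_le (by linarith [pi_pos]), smul_eq_mul]
  ring

noncomputable def radialPrimitive (a ρ : ℝ) : ℝ :=
  -π / (√(1 + ρ ^ 2) * (4 * (1 + ρ ^ 2) + a ^ 2) ^ 2)

lemma hasDerivAt_radialPrimitive (a ρ : ℝ) :
    HasDerivAt (radialPrimitive a)
      (ρ * (π * (20 * (1 + ρ ^ 2) + a ^ 2) /
        (√(1 + ρ ^ 2) ^ 3 * (4 * (1 + ρ ^ 2) + a ^ 2) ^ 3))) ρ := by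
  have h1 : 0 < 1 + ρ ^ 2 := by positivity
  have hs : √(1 + ρ ^ 2) ^ 2 = 1 + ρ ^ 2 := sq_sqrt h1.le
  have dSq : HasDerivAt (fun ρ => 1 + ρ ^ 2) (2 * ρ) ρ := by
    simpa using ((hasDerivAt_id ρ).pow 2).const_add 1
  have dDen : HasDerivAt (fun ρ => √(1 + ρ ^ 2) * (4 * (1 + ρ ^ 2) + a ^ 2) ^ 2) _ ρ :=
    ((hasDerivAt_sqrt h1.ne').comp ρ dSq).mul (((dSq.const_mul 4).add_const (a ^ 2)).pow 2)
  refine ((hasDerivAt_const ρ (-π)).div dDen (by positivity)).congr_deriv ?_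
  simp only [Function.comp_apply, Nat.cast_ofNat]
  field_simp
  rw [hs]
  ring

lemma tendsto_radialPrimitive (a : ℝ) : Tendsto (radialPrimitive a) atTop (𝓝 0) := by
  have hSq : Tendsto (fun ρ : ℝ => 1 + ρ ^ 2) atTop atTop :=
    tendsto_atTop_add_const_left _ 1 (tendsto_pow_atTop two_ne_zero)
  have hQ : Tendsto (fun ρ : ℝ => (4 * (1 + ρ ^ 2) + a ^ 2) ^ 2) atTop atTop :=
    (tendsto_pow_atTop two_ne_zero).comp
      (tendsto_atTop_add_const_right _ _ (hSq.const_mul_atTop (by norm_num)))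
  exact tendsto_const_nhds.div_atTop ((tendsto_sqrt_atTop.comp hSq).atTop_mul_atTop₀ hQ)

lemma integral_Ioi_deriv_radialPrimitive (a : ℝ) :
    ∫ ρ in Ioi 0, ρ * (π * (20 * (1 + ρ ^ 2) + a ^ 2) /
        (√(1 + ρ ^ 2) ^ 3 * (4 * (1 + ρ ^ 2) + a ^ 2) ^ 3)) = π / (4 + a ^ 2) ^ 2 := by
  rw [integral_Ioi_of_hasDerivAt_of_nonneg' (fun ρ _ => hasDerivAt_radialPrimitive a ρ)
    (fun ρ hρ => by have : 0 < ρ := hρ; positivity) (tendsto_radialPrimitive a)]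
  simp [radialPrimitive]
  ring

lemma integral_comp_norm_sub_norm_of_norm_eq {E G : Type*} [NormedAddCommGroup E]
    [InnerProductSpace ℝ E] [FiniteDimensional ℝ E] [MeasurableSpace E] [BorelSpace E]
    [NormedAddCommGroup G] [NormedSpace ℝ G] (F : ℝ → ℝ → G) {w w' : E} (h : ‖w‖ = ‖w'‖) :
    ∫ z, F ‖w - z‖ ‖z‖ = ∫ z, F ‖w' - z‖ ‖z‖ := by
  set T := (ℝ ∙ (w - w'))ᗮ.reflection
  have hT : T w = w' := Submodule.reflection_sub h
  symm
  rw [← T.measurePreserving.integral_comp T.toHomeomorph.measurableEmbedding]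
  congr 1 with z
  rw [← hT, ← map_sub, LinearIsometryEquiv.norm_map, LinearIsometryEquiv.norm_map]

lemma integrable_inv_sq_mul_sq_norm {E : Type*} [NormedAddCommGroup E] [NormedSpace ℝ E]
    [FiniteDimensional ℝ E] [MeasurableSpace E] [BorelSpace E] {μ : Measure E}
    [μ.IsAddHaarMeasure] (hE : Module.finrank ℝ E < 4) (w : E) :
    Integrable (fun z : E => ((1 + ‖w - z‖ ^ 2) ^ 2 * (1 + ‖z‖ ^ 2) ^ 2)⁻¹) μ := by
  have hBound := integrable_rpow_neg_one_add_norm_sq (μ := μ) (r := 4) (by exact_mod_cast hE)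
  refine hBound.mono' (Continuous.aestronglyMeasurable ?_) (.of_forall fun z => ?_)
  · exact (by fun_prop : Continuous _).inv₀ fun z => by positivity
  · rw [Real.norm_eq_abs, abs_of_pos (by positivity), show -(4 : ℝ) / 2 = -(2 : ℕ) by norm_num,
      rpow_neg (by positivity), rpow_natCast]
    refine inv_anti₀ (by positivity) (le_mul_of_one_le_left (by positivity) ?_)
    exact one_le_pow₀ (le_add_of_nonneg_right (by positivity))

noncomputable def euclideanSpaceFinThreeEquiv : ℝ × ℝ × ℝ ≃ᵐ EuclideanSpace ℝ (Fin 3) :=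
  ((MeasurableEquiv.refl ℝ).prodCongr MeasurableEquiv.finTwoArrow.symm).trans
    (((MeasurableEquiv.piFinSuccAbove (fun _ => ℝ) 0).symm).trans
      (MeasurableEquiv.toLp 2 (Fin 3 → ℝ)))

lemma measurePreserving_euclideanSpaceFinThreeEquiv :
    MeasurePreserving euclideanSpaceFinThreeEquiv :=
  ((MeasurePreserving.id volume).prod (volume_preserving_finTwoArrow ℝ).symm).trans
    (((volume_preserving_piFinSuccAbove (fun _ => ℝ) 0).symm).trans
      (EuclideanSpace.volume_preserving_symm_measurableEquiv_toLp (Fin 3)).symm)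

@[simp]
lemma euclideanSpaceFinThreeEquiv_apply (p : ℝ × ℝ × ℝ) :
    euclideanSpaceFinThreeEquiv p = !₂[p.1, p.2.1, p.2.2] := by
  ext i
  fin_cases i <;>
    simp [euclideanSpaceFinThreeEquiv, MeasurableEquiv.piFinSuccAbove, MeasurableEquiv.prodCongr,
      MeasurableEquiv.finTwoArrow]

lemma norm_euclideanSpaceFinThreeEquiv_sq (p : ℝ × ℝ × ℝ) :
    ‖euclideanSpaceFinThreeEquiv p‖ ^ 2 = p.1 ^ 2 + (p.2.1 ^ 2 + p.2.2 ^ 2) := by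
  simp [EuclideanSpace.norm_sq_eq, Fin.sum_univ_three, add_assoc]

lemma euclideanSpaceFinThreeEquiv_sub (p q : ℝ × ℝ × ℝ) :
    euclideanSpaceFinThreeEquiv p - euclideanSpaceFinThreeEquiv q =
      euclideanSpaceFinThreeEquiv (p - q) := by
  ext i
  fin_cases i <;> simp

lemma integral_inv_sq_mul_sq_add {s : ℝ} (hs : 0 ≤ s) (r : ℝ) :
    ∫ y, ((1 + ((r - y) ^ 2 + s)) ^ 2 * (1 + (y ^ 2 + s)) ^ 2)⁻¹
      = π * (20 * (1 + s) + r ^ 2) / (√(1 + s) ^ 3 * (4 * (1 + s) + r ^ 2) ^ 3) := by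
  have h := integral_inv_sq_mul_sq (t := √(1 + s)) (sqrt_pos.mpr (by positivity)) r
  rw [sq_sqrt (by positivity)] at h
  rw [← h]
  congr 1 with y
  ring

theorem integral_inv_sq_mul_sq_euclideanSpace (w : EuclideanSpace ℝ (Fin 3)) :
    ∫ z, ((1 + ‖w - z‖ ^ 2) ^ 2 * (1 + ‖z‖ ^ 2) ^ 2)⁻¹ = 2 * π ^ 2 / (4 + ‖w‖ ^ 2) ^ 2 := by
  set r := ‖w‖
  set e := euclideanSpaceFinThreeEquiv
  have he := measurePreserving_euclideanSpaceFinThreeEquiv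
  have hw : ‖w‖ = ‖e (r, 0, 0)‖ := by
    rw [← sq_eq_sq₀ (norm_nonneg _) (norm_nonneg _), norm_euclideanSpaceFinThreeEquiv_sq]
    simp [r]
  let g (z : EuclideanSpace ℝ (Fin 3)) : ℝ :=
    ((1 + ‖e (r, 0, 0) - z‖ ^ 2) ^ 2 * (1 + ‖z‖ ^ 2) ^ 2)⁻¹
  let f (p : ℝ × ℝ × ℝ) : ℝ :=
    ((1 + ((r - p.1) ^ 2 + (p.2.1 ^ 2 + p.2.2 ^ 2))) ^ 2 *
      (1 + (p.1 ^ 2 + (p.2.1 ^ 2 + p.2.2 ^ 2))) ^ 2)⁻¹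
  have hgf : g ∘ e = f := by
    ext p
    simp only [Function.comp_apply, g, f, e, euclideanSpaceFinThreeEquiv_sub,
      norm_euclideanSpaceFinThreeEquiv_sq]
    simp
  have hf : Integrable f := by
    rw [← hgf, he.integrable_comp_emb e.measurableEmbedding]
    exact integrable_inv_sq_mul_sq_norm (by simp) _
  calc ∫ z, ((1 + ‖w - z‖ ^ 2) ^ 2 * (1 + ‖z‖ ^ 2) ^ 2)⁻¹
      = ∫ z, g z :=
        integral_comp_norm_sub_norm_of_norm_eq (fun s t => ((1 + s ^ 2) ^ 2 * (1 + t ^ 2) ^ 2)⁻¹) hw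
    _ = ∫ p, f p := by rw [← hgf]; exact (he.integral_comp' g).symm
    _ = ∫ v : ℝ × ℝ, ∫ y, f (y, v) := integral_prod_symm f hf
    _ = 2 * π ^ 2 / (4 + r ^ 2) ^ 2 := by
        simp only [f, integral_inv_sq_mul_sq_add (add_nonneg (sq_nonneg _) (sq_nonneg _))]
        rw [integral_prod_comp_sq_add_sq
            (fun s => π * (20 * (1 + s) + r ^ 2) / (√(1 + s) ^ 3 * (4 * (1 + s) + r ^ 2) ^ 3)),
          integral_Ioi_deriv_radialPrimitive]
        ring

theorem stmt_2_general (b c : ℝ) (hb : 0 < b)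
    (u : EuclideanSpace ℝ (Fin 3) → ℝ)
    (hu : ∀ x, u x = c / (1 + b ^ 2 * ‖x‖ ^ 2) ^ 2) :
    ∀ x, (∫ y, u (x - y) * u y)
      = 2 * π ^ 2 * c ^ 2 / (b ^ 3 * (4 + b ^ 2 * ‖x‖ ^ 2) ^ 2) := by
  intro x
  have hScale (y : EuclideanSpace ℝ (Fin 3)) : u (x - y) * u y =
      c ^ 2 * ((1 + ‖b • x - b • y‖ ^ 2) ^ 2 * (1 + ‖b • y‖ ^ 2) ^ 2)⁻¹ := by
    rw [hu, hu, ← smul_sub, norm_smul, norm_smul, Real.norm_eq_abs, abs_of_pos hb]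
    field_simp
  simp_rw [hScale]
  rw [integral_const_mul, Measure.integral_comp_smul volume
      (fun z => ((1 + ‖b • x - z‖ ^ 2) ^ 2 * (1 + ‖z‖ ^ 2) ^ 2)⁻¹) b,
    integral_inv_sq_mul_sq_euclideanSpace, finrank_euclideanSpace_fin, norm_smul, Real.norm_eq_abs,
    abs_of_pos hb, abs_of_pos (by positivity), smul_eq_mul]
  field_simp

theorem stmt_2 (b c : ℝ) (hb : 0 < b) (hc : 0 < c)
    (u : EuclideanSpace ℝ (Fin 3) → ℝ)
    (hu : ∀ x, u x = c / (1 + b ^ 2 * ‖x‖ ^ 2) ^ 2) :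
    ∀ x, (∫ y, u (x - y) * u y)
      = 2 * π ^ 2 * c ^ 2 / (b ^ 3 * (4 + b ^ 2 * ‖x‖ ^ 2) ^ 2) :=
  stmt_2_general b c hb u hu
end

section
/- For u(x) = c/(1 + b²|x|²)² with b, c > 0 and ρ = b³/(cπ²), one has 2u(x) − ρ(u∗u)(x) = 6c(5 + 2b²|x|²)/((1 + b²|x|²)²(4 + b²|x|²)²) ≥ 0 for all x ∈ ℝ³. -/
/-!
Schwinger parametrisation `A⁻² = ∫₀^∞ t e^{-tA} dt`, applied to both factors, turns `u ∗ u` into a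
superposition of convolutions of two Gaussians, which are again Gaussians. After integrating out
`y`, the substitution `s = tσ` separates the remaining double integral into a Γ(5/2)-integral in `t`
and an elementary integral in `σ`, which has an explicit antiderivative.
-/

open MeasureTheory Real Set Filter Topology

lemma integrableOn_Ioi_rpow_sub_one_mul_exp_neg_mul {a r : ℝ} (ha : 0 < a) (hr : 0 < r) :
    IntegrableOn (fun t : ℝ => t ^ (a - 1) * exp (-(r * t))) (Ioi 0) := by
  refine (integrableOn_rpow_mul_exp_neg_mul_rpow (s := a - 1) (by linarith) one_pos hr).congr_fun
    (fun t _ => ?_) measurableSet_Ioi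
  simp

lemma lintegral_Ioi_rpow_sub_one_mul_exp_neg_mul {a r : ℝ} (ha : 0 < a) (hr : 0 < r) :
    ∫⁻ t in Ioi 0, ENNReal.ofReal (t ^ (a - 1) * exp (-(r * t)))
      = ENNReal.ofReal ((1 / r) ^ a * Gamma a) := by
  rw [← integral_rpow_mul_exp_neg_mul_Ioi ha hr, ofReal_integral_eq_lintegral_ofReal
    (integrableOn_Ioi_rpow_sub_one_mul_exp_neg_mul ha hr)]
  exact ae_restrict_of_forall_mem measurableSet_Ioi fun t (ht : 0 < t) => by positivity

lemma ofReal_inv_sq_eq_lintegral {a : ℝ} (ha : 0 < a) :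
    ENNReal.ofReal (a ^ 2)⁻¹ = ∫⁻ t in Ioi 0, ENNReal.ofReal (t * exp (-(a * t))) := by
  have h := lintegral_Ioi_rpow_sub_one_mul_exp_neg_mul two_pos ha
  norm_num [Gamma_two] at h
  rw [h]

lemma ofReal_inv_sq_mul_inv_sq_eq_lintegral {a b : ℝ} (ha : 0 < a) (hb : 0 < b) :
    ENNReal.ofReal ((a ^ 2)⁻¹ * (b ^ 2)⁻¹)
      = ∫⁻ t in Ioi 0, ∫⁻ s in Ioi 0, ENNReal.ofReal (t * s * exp (-(a * t + b * s))) := by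
  have hsplit : ∀ t s : ℝ, 0 < t → 0 < s → ENNReal.ofReal (t * s * exp (-(a * t + b * s)))
      = ENNReal.ofReal (t * exp (-(a * t))) * ENNReal.ofReal (s * exp (-(b * s))) := by
    intro t s ht hs
    rw [← ENNReal.ofReal_mul (by positivity), neg_add, exp_add]
    ring_nf
  rw [ENNReal.ofReal_mul (by positivity), ofReal_inv_sq_eq_lintegral ha,
    ← lintegral_mul_const' _ _ ENNReal.ofReal_ne_top]
  refine setLIntegral_congr_fun measurableSet_Ioi fun t ht => ?_
  rw [ofReal_inv_sq_eq_lintegral hb, ← lintegral_const_mul' _ _ ENNReal.ofReal_ne_top]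
  exact (setLIntegral_congr_fun measurableSet_Ioi fun s hs => hsplit t s ht hs).symm

section Gaussian

variable {V : Type*} [NormedAddCommGroup V] [InnerProductSpace ℝ V]

lemma mul_norm_sub_sq_add_mul_norm_sq {p q : ℝ} (hpq : p + q ≠ 0) (x y : V) :
    p * ‖x - y‖ ^ 2 + q * ‖y‖ ^ 2
      = (p + q) * ‖y - (p / (p + q)) • x‖ ^ 2 + p * q / (p + q) * ‖x‖ ^ 2 := by
  rw [norm_sub_sq_real, norm_sub_sq_real, norm_smul, real_inner_smul_right, real_inner_comm,
    mul_pow, norm_eq_abs, sq_abs]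
  field_simp
  ring

variable [FiniteDimensional ℝ V] [MeasurableSpace V] [BorelSpace V]

lemma lintegral_exp_neg_mul_norm_sq {p : ℝ} (hp : 0 < p) :
    ∫⁻ y : V, ENNReal.ofReal (exp (-(p * ‖y‖ ^ 2)))
      = ENNReal.ofReal ((π / p) ^ (Module.finrank ℝ V / 2 : ℝ)) := by
  have h := GaussianFourier.integral_rexp_neg_mul_sq_norm (V := V) hp
  simp only [neg_mul] at h
  rw [← h, ofReal_integral_eq_lintegral_ofReal
    (Integrable.of_integral_ne_zero (by rw [h]; positivity))
    (Eventually.of_forall fun y => by positivity)]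

lemma lintegral_exp_neg_mul_norm_sub_sq_add {p q : ℝ} (hpq : 0 < p + q) (x : V) :
    ∫⁻ y : V, ENNReal.ofReal (exp (-(p * ‖x - y‖ ^ 2 + q * ‖y‖ ^ 2)))
      = ENNReal.ofReal ((π / (p + q)) ^ (Module.finrank ℝ V / 2 : ℝ)
          * exp (-(p * q / (p + q) * ‖x‖ ^ 2))) := by
  simp_rw [mul_norm_sub_sq_add_mul_norm_sq hpq.ne', neg_add, exp_add,
    ENNReal.ofReal_mul (exp_pos _).le]
  rw [lintegral_mul_const' _ _ ENNReal.ofReal_ne_top,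
    lintegral_sub_right_eq_self (fun y => ENNReal.ofReal (exp (-((p + q) * ‖y‖ ^ 2)))),
    lintegral_exp_neg_mul_norm_sq hpq, ← ENNReal.ofReal_mul (by positivity)]

end Gaussian

section Elementary

variable {R : ℝ}

lemma hasDerivAt_cubic_mul_rpow_neg_three_halves {σ : ℝ} (hQ : 0 < (1 + σ) ^ 2 + R * σ) :
    HasDerivAt
      (fun σ => (2 * σ ^ 3 + 3 * (2 + R) * σ ^ 2 - 3 * (2 + R) * σ - 2)
        * ((1 + σ) ^ 2 + R * σ) ^ (-(3 / 2 : ℝ)))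
      (3 / 2 * (4 + R) ^ 2 * (σ * (1 + σ) * ((1 + σ) ^ 2 + R * σ) ^ (-(5 / 2 : ℝ)))) σ := by
  have hP : HasDerivAt (fun σ => 2 * σ ^ 3 + 3 * (2 + R) * σ ^ 2 - 3 * (2 + R) * σ - 2)
      (6 * σ ^ 2 + 6 * (2 + R) * σ - 3 * (2 + R)) σ := by
    refine ((((hasDerivAt_pow 3 σ).const_mul 2).add ((hasDerivAt_pow 2 σ).const_mul
      (3 * (2 + R)))).sub ((hasDerivAt_id σ).const_mul (3 * (2 + R)))).sub_const 2
      |>.congr_deriv ?_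
    ring
  have hQ' : HasDerivAt (fun σ => (1 + σ) ^ 2 + R * σ) (2 * (1 + σ) + R) σ := by
    refine ((((hasDerivAt_id σ).const_add 1).pow 2).add ((hasDerivAt_id σ).const_mul R))
      |>.congr_deriv ?_
    simp only [id]
    ring
  refine (hP.mul (hQ'.rpow_const (p := -(3 / 2 : ℝ)) (Or.inl hQ.ne'))).congr_deriv ?_
  rw [show -(3 / 2 : ℝ) - 1 = -(5 / 2) by norm_num, show -(3 / 2 : ℝ) = 1 + -(5 / 2) by norm_num,
    rpow_one_add' hQ.le (by norm_num)]
  ring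

lemma tendsto_cubic_mul_rpow_neg_three_halves (hR : 0 ≤ R) :
    Tendsto
      (fun σ => (2 * σ ^ 3 + 3 * (2 + R) * σ ^ 2 - 3 * (2 + R) * σ - 2)
        * ((1 + σ) ^ 2 + R * σ) ^ (-(3 / 2 : ℝ)))
      atTop (𝓝 2) := by
  set g : ℝ → ℝ := fun τ => (2 + 3 * (2 + R) * τ - 3 * (2 + R) * τ ^ 2 - 2 * τ ^ 3)
    * ((1 + τ) ^ 2 + R * τ) ^ (-(3 / 2 : ℝ))
  have hg : ContinuousAt g 0 := by fun_prop (disch := norm_num)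
  have h := hg.tendsto.comp tendsto_inv_atTop_zero
  rw [show g 0 = 2 by simp [g]] at h
  refine h.congr' ((eventually_gt_atTop 0).mono fun σ (hσ : 0 < σ) => ?_)
  have hQ : 0 < (1 + σ) ^ 2 + R * σ := by positivity
  have hscale : (1 + σ⁻¹) ^ 2 + R * σ⁻¹ = ((1 + σ) ^ 2 + R * σ) * (σ ^ 2)⁻¹ := by
    field_simp
    ring
  have hpow : ((σ ^ 2)⁻¹ : ℝ) ^ (-(3 / 2 : ℝ)) = σ ^ 3 := by
    rw [inv_rpow (by positivity), rpow_neg (by positivity), inv_inv, ← rpow_natCast,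
      ← rpow_mul hσ.le]
    norm_num
  simp only [Function.comp_apply, g]
  rw [hscale, mul_rpow hQ.le (by positivity), hpow]
  field_simp

lemma lintegral_mul_one_add_mul_rpow_neg_five_halves (hR : 0 ≤ R) :
    ∫⁻ σ in Ioi 0, ENNReal.ofReal (σ * (1 + σ) * ((1 + σ) ^ 2 + R * σ) ^ (-(5 / 2 : ℝ)))
      = ENNReal.ofReal (8 / (3 * (4 + R) ^ 2)) := by
  set k : ℝ := 2 / (3 * (4 + R) ^ 2)
  have hderiv : ∀ σ ∈ Ici (0 : ℝ), HasDerivAt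
      (fun σ => k * ((2 * σ ^ 3 + 3 * (2 + R) * σ ^ 2 - 3 * (2 + R) * σ - 2)
        * ((1 + σ) ^ 2 + R * σ) ^ (-(3 / 2 : ℝ))))
      (σ * (1 + σ) * ((1 + σ) ^ 2 + R * σ) ^ (-(5 / 2 : ℝ))) σ := fun σ (hσ : 0 ≤ σ) =>
    ((hasDerivAt_cubic_mul_rpow_neg_three_halves (by positivity)).const_mul k).congr_deriv
      (by simp only [k]; field_simp)
  have hnonneg : ∀ σ ∈ Ioi (0 : ℝ), 0 ≤ σ * (1 + σ) * ((1 + σ) ^ 2 + R * σ) ^ (-(5 / 2 : ℝ)) :=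
    fun σ (hσ : 0 < σ) => by positivity
  have hlim := (tendsto_cubic_mul_rpow_neg_three_halves hR).const_mul k
  rw [← ofReal_integral_eq_lintegral_ofReal (integrableOn_Ioi_deriv_of_nonneg' hderiv hnonneg hlim)
    (ae_restrict_of_forall_mem measurableSet_Ioi hnonneg),
    integral_Ioi_of_hasDerivAt_of_nonneg' hderiv hnonneg hlim]
  norm_num [k]
  ring_nf

end Elementary

lemma setLIntegral_Ioi_zero_eq_mul_comp_mul_left {f : ℝ → ENNReal} (hf : Measurable f) {t : ℝ}
    (ht : 0 < t) :
    ∫⁻ s in Ioi 0, f s = ENNReal.ofReal t * ∫⁻ σ in Ioi 0, f (t * σ) := by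
  have hpre : (t * ·) ⁻¹' Ioi 0 = Ioi 0 := by
    ext σ
    simp [mul_pos_iff_of_pos_left ht]
  have hmap := setLIntegral_map (μ := volume) (s := Ioi 0) measurableSet_Ioi hf
    (measurable_const_mul t)
  rw [hpre, Real.map_volume_mul_left ht.ne', Measure.restrict_smul, lintegral_smul_measure,
    smul_eq_mul, abs_of_pos (inv_pos.2 ht)] at hmap
  rw [← hmap, ← mul_assoc, ← ENNReal.ofReal_mul ht.le, mul_inv_cancel₀ ht.ne',
    ENNReal.ofReal_one, one_mul]

/-- What remains of the Schwinger integrand `t s e^{-tA - sB}` after the Gaussian integration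
over `y`, up to the factor `π^{3/2} / b³`; here `R = b²‖x‖²`. -/
noncomputable def schwingerIntegrand (R t s : ℝ) : ℝ :=
  t * s * (t + s) ^ (-(3 / 2 : ℝ)) * exp (-(t + s + R * (t * s / (t + s))))

lemma mul_schwingerIntegrand_mul_left (R : ℝ) {t σ : ℝ} (ht : 0 < t) (hσ : 0 ≤ σ) :
    t * schwingerIntegrand R t (t * σ)
      = σ * (1 + σ) ^ (-(3 / 2 : ℝ))
        * (t ^ ((5 / 2 : ℝ) - 1) * exp (-((1 + σ + R * σ / (1 + σ)) * t))) := by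
  have h1σ : 0 < 1 + σ := by positivity
  rw [schwingerIntegrand, show t + t * σ = t * (1 + σ) by ring, mul_rpow ht.le h1σ.le,
    show (5 / 2 : ℝ) - 1 = 3 + -(3 / 2) by norm_num, rpow_add ht, rpow_ofNat]
  have hexp : t * (1 + σ) + R * (t * (t * σ) / (t * (1 + σ))) = (1 + σ + R * σ / (1 + σ)) * t := by
    field_simp
  rw [hexp]
  ring

lemma rpow_neg_three_halves_mul_inv_rpow_five_halves {R σ : ℝ} (hR : 0 ≤ R) (hσ : 0 ≤ σ) :
    (1 + σ) ^ (-(3 / 2 : ℝ)) * (1 / (1 + σ + R * σ / (1 + σ))) ^ (5 / 2 : ℝ)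
      = (1 + σ) * ((1 + σ) ^ 2 + R * σ) ^ (-(5 / 2 : ℝ)) := by
  have h1σ : 0 < 1 + σ := by positivity
  have hQ : 0 < (1 + σ) ^ 2 + R * σ := by positivity
  rw [show 1 / (1 + σ + R * σ / (1 + σ)) = (1 + σ) / ((1 + σ) ^ 2 + R * σ) by field_simp,
    div_rpow h1σ.le hQ.le, rpow_neg hQ.le, mul_div_assoc', ← rpow_add h1σ]
  norm_num [div_eq_mul_inv]

lemma lintegral_lintegral_schwingerIntegrand {R : ℝ} (hR : 0 ≤ R) :
    ∫⁻ t in Ioi 0, ∫⁻ s in Ioi 0, ENNReal.ofReal (schwingerIntegrand R t s)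
      = ENNReal.ofReal (2 * √π / (4 + R) ^ 2) := by
  calc _ = ∫⁻ t in Ioi 0, ∫⁻ σ in Ioi 0, ENNReal.ofReal (σ * (1 + σ) ^ (-(3 / 2 : ℝ))
        * (t ^ ((5 / 2 : ℝ) - 1) * exp (-((1 + σ + R * σ / (1 + σ)) * t)))) := by
        refine setLIntegral_congr_fun measurableSet_Ioi fun t (ht : 0 < t) => ?_
        rw [setLIntegral_Ioi_zero_eq_mul_comp_mul_left (by unfold schwingerIntegrand; fun_prop) ht,
          ← lintegral_const_mul' _ _ ENNReal.ofReal_ne_top]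
        refine setLIntegral_congr_fun measurableSet_Ioi fun σ (hσ : 0 < σ) => ?_
        rw [← ENNReal.ofReal_mul ht.le, mul_schwingerIntegrand_mul_left R ht hσ.le]
    _ = ∫⁻ σ in Ioi 0, ∫⁻ t in Ioi 0, ENNReal.ofReal (σ * (1 + σ) ^ (-(3 / 2 : ℝ))
        * (t ^ ((5 / 2 : ℝ) - 1) * exp (-((1 + σ + R * σ / (1 + σ)) * t)))) :=
        lintegral_lintegral_swap (by fun_prop)
    _ = ∫⁻ σ in Ioi 0, ENNReal.ofReal (Gamma (5 / 2))
        * ENNReal.ofReal (σ * (1 + σ) * ((1 + σ) ^ 2 + R * σ) ^ (-(5 / 2 : ℝ))) := by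
        refine setLIntegral_congr_fun measurableSet_Ioi fun σ (hσ : 0 < σ) => ?_
        have hκ : 0 < 1 + σ + R * σ / (1 + σ) := by positivity
        simp_rw [ENNReal.ofReal_mul (by positivity : 0 ≤ σ * (1 + σ) ^ (-(3 / 2 : ℝ)))]
        rw [lintegral_const_mul' _ _ ENNReal.ofReal_ne_top,
          lintegral_Ioi_rpow_sub_one_mul_exp_neg_mul (by norm_num) hκ, ← ENNReal.ofReal_mul
            (by positivity), ← ENNReal.ofReal_mul (Gamma_pos_of_pos (by norm_num)).le]
        congr 1
        rw [mul_assoc σ (1 + σ), ← rpow_neg_three_halves_mul_inv_rpow_five_halves hR hσ.le]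
        ring
    _ = ENNReal.ofReal (2 * √π / (4 + R) ^ 2) := by
        rw [lintegral_const_mul' _ _ ENNReal.ofReal_ne_top,
          lintegral_mul_one_add_mul_rpow_neg_five_halves hR,
          ← ENNReal.ofReal_mul (Gamma_pos_of_pos (by norm_num)).le]
        have hΓ : Gamma (5 / 2) = 3 * √π / 4 := by
          rw [show (5 / 2 : ℝ) = (2 : ℕ) + 1 / 2 by norm_num, Gamma_nat_add_half]
          norm_num
        rw [hΓ]
        congr 1
        field_simp
        ring

section Convolution

variable {V : Type*} [NormedAddCommGroup V] [InnerProductSpace ℝ V] [FiniteDimensional ℝ V]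
  [MeasurableSpace V] [BorelSpace V]

lemma lintegral_mul_exp_neg_eq_schwingerIntegrand (hV : Module.finrank ℝ V = 3) {b t s : ℝ}
    (hb : 0 < b) (ht : 0 < t) (hs : 0 < s) (x : V) :
    ∫⁻ y : V, ENNReal.ofReal
        (t * s * exp (-((1 + b ^ 2 * ‖x - y‖ ^ 2) * t + (1 + b ^ 2 * ‖y‖ ^ 2) * s)))
      = ENNReal.ofReal (π ^ (3 / 2 : ℝ) / b ^ 3 * schwingerIntegrand (b ^ 2 * ‖x‖ ^ 2) t s) := by
  have hsplit : ∀ y : V,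
      t * s * exp (-((1 + b ^ 2 * ‖x - y‖ ^ 2) * t + (1 + b ^ 2 * ‖y‖ ^ 2) * s))
        = t * s * exp (-(t + s))
          * exp (-(t * b ^ 2 * ‖x - y‖ ^ 2 + s * b ^ 2 * ‖y‖ ^ 2)) := fun y => by
    rw [mul_assoc _ (exp _), ← exp_add]
    ring_nf
  simp_rw [hsplit, ENNReal.ofReal_mul (by positivity : 0 ≤ t * s * exp (-(t + s)))]
  rw [lintegral_const_mul' _ _ ENNReal.ofReal_ne_top,
    lintegral_exp_neg_mul_norm_sub_sq_add (by positivity), hV, Nat.cast_ofNat,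
    ← ENNReal.ofReal_mul (by positivity)]
  congr 1
  have hts : 0 < t + s := by positivity
  have hb3 : (b ^ 2) ^ (3 / 2 : ℝ) = b ^ 3 := by
    rw [← rpow_natCast, ← rpow_mul hb.le, ← rpow_natCast]
    norm_num
  rw [schwingerIntegrand, show t * b ^ 2 + s * b ^ 2 = b ^ 2 * (t + s) by ring,
    div_rpow pi_pos.le (by positivity), mul_rpow (by positivity) hts.le, hb3, rpow_neg hts.le]
  have hexp : exp (-(t + s)) * exp (-(t * b ^ 2 * (s * b ^ 2) / (b ^ 2 * (t + s)) * ‖x‖ ^ 2))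
      = exp (-(t + s + b ^ 2 * ‖x‖ ^ 2 * (t * s / (t + s)))) := by
    rw [← exp_add]
    congr 1
    field_simp
    ring
  rw [← hexp]
  field_simp

lemma lintegral_inv_sq_mul_inv_sq (hV : Module.finrank ℝ V = 3) {b : ℝ} (hb : 0 < b) (x : V) :
    ∫⁻ y : V, ENNReal.ofReal (((1 + b ^ 2 * ‖x - y‖ ^ 2) ^ 2)⁻¹ * ((1 + b ^ 2 * ‖y‖ ^ 2) ^ 2)⁻¹)
      = ENNReal.ofReal (2 * π ^ 2 / (b ^ 3 * (4 + b ^ 2 * ‖x‖ ^ 2) ^ 2)) := by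
  set R := b ^ 2 * ‖x‖ ^ 2
  have hmeas : Measurable fun p : V × ℝ × ℝ => ENNReal.ofReal (p.2.1 * p.2.2
      * exp (-((1 + b ^ 2 * ‖x - p.1‖ ^ 2) * p.2.1 + (1 + b ^ 2 * ‖p.1‖ ^ 2) * p.2.2))) := by
    fun_prop
  calc _ = ∫⁻ y : V, ∫⁻ t in Ioi 0, ∫⁻ s in Ioi 0, ENNReal.ofReal (t * s
        * exp (-((1 + b ^ 2 * ‖x - y‖ ^ 2) * t + (1 + b ^ 2 * ‖y‖ ^ 2) * s))) :=
        lintegral_congr fun y => ofReal_inv_sq_mul_inv_sq_eq_lintegral (by positivity)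
          (by positivity)
    _ = ∫⁻ t in Ioi 0, ∫⁻ s in Ioi 0, ∫⁻ y : V, ENNReal.ofReal (t * s
        * exp (-((1 + b ^ 2 * ‖x - y‖ ^ 2) * t + (1 + b ^ 2 * ‖y‖ ^ 2) * s))) := by
        rw [lintegral_lintegral_swap ((hmeas.comp (by fun_prop : Measurable fun q :
          (V × ℝ) × ℝ => (q.1.1, q.1.2, q.2))).lintegral_prod_right').aemeasurable]
        refine lintegral_congr fun t => lintegral_lintegral_swap ?_
        exact (hmeas.comp (by fun_prop : Measurable fun q : V × ℝ => (q.1, t, q.2))).aemeasurable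
    _ = ∫⁻ t in Ioi 0, ∫⁻ s in Ioi 0,
        ENNReal.ofReal (π ^ (3 / 2 : ℝ) / b ^ 3) * ENNReal.ofReal (schwingerIntegrand R t s) := by
        refine setLIntegral_congr_fun measurableSet_Ioi fun t (ht : 0 < t) => ?_
        refine setLIntegral_congr_fun measurableSet_Ioi fun s (hs : 0 < s) => ?_
        rw [lintegral_mul_exp_neg_eq_schwingerIntegrand hV hb ht hs, ENNReal.ofReal_mul
          (by positivity)]
    _ = ENNReal.ofReal (2 * π ^ 2 / (b ^ 3 * (4 + R) ^ 2)) := by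
        simp_rw [lintegral_const_mul' _ _ ENNReal.ofReal_ne_top]
        rw [lintegral_lintegral_schwingerIntegrand (by positivity),
          ← ENNReal.ofReal_mul (by positivity)]
        congr 1
        have hπ : π ^ (3 / 2 : ℝ) * √π = π ^ 2 := by
          rw [sqrt_eq_rpow, ← rpow_add pi_pos]
          norm_num
        have h4R : 0 < 4 + R := by positivity
        field_simp
        linear_combination hπ

lemma integral_inv_sq_mul_inv_sq (hV : Module.finrank ℝ V = 3) {b : ℝ} (hb : 0 < b) (x : V) :
    ∫ y : V, ((1 + b ^ 2 * ‖x - y‖ ^ 2) ^ 2)⁻¹ * ((1 + b ^ 2 * ‖y‖ ^ 2) ^ 2)⁻¹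
      = 2 * π ^ 2 / (b ^ 3 * (4 + b ^ 2 * ‖x‖ ^ 2) ^ 2) := by
  rw [integral_eq_lintegral_of_nonneg_ae (Eventually.of_forall fun y => by positivity)
    (by fun_prop), lintegral_inv_sq_mul_inv_sq hV hb x, ENNReal.toReal_ofReal (by positivity)]

end Convolution

theorem stmt_4 (b c : ℝ) (hb : 0 < b) (hc : 0 < c)
    (u : EuclideanSpace ℝ (Fin 3) → ℝ)
    (hu : ∀ x, u x = c / (1 + b ^ 2 * ‖x‖ ^ 2) ^ 2)
    (ρ : ℝ) (hρ : ρ = b ^ 3 / (c * π ^ 2)) :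
    ∀ x, 2 * u x - ρ * (∫ y, u (x - y) * u y)
        = 6 * c * (5 + 2 * b ^ 2 * ‖x‖ ^ 2)
          / ((1 + b ^ 2 * ‖x‖ ^ 2) ^ 2 * (4 + b ^ 2 * ‖x‖ ^ 2) ^ 2)
      ∧ 0 ≤ 2 * u x - ρ * (∫ y, u (x - y) * u y) := by
  intro x
  have hconv : ∫ y, u (x - y) * u y
      = c ^ 2 * (2 * π ^ 2 / (b ^ 3 * (4 + b ^ 2 * ‖x‖ ^ 2) ^ 2)) := by
    rw [← integral_inv_sq_mul_inv_sq finrank_euclideanSpace_fin hb x, ← integral_const_mul]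
    congr 1 with y
    rw [hu, hu]
    ring
  have heq : 2 * u x - ρ * (∫ y, u (x - y) * u y)
      = 6 * c * (5 + 2 * b ^ 2 * ‖x‖ ^ 2)
          / ((1 + b ^ 2 * ‖x‖ ^ 2) ^ 2 * (4 + b ^ 2 * ‖x‖ ^ 2) ^ 2) := by
    rw [hconv, hu, hρ]
    field_simp
    ring
  exact ⟨heq, heq ▸ by positivity⟩
end

section
/- For the explicit potential v of the previous theorem (with e/b² ≥ 7/9, c ≤ 1), the function (1+|x|²)v(x) is integrable on ℝ³, but ∫_{ℝ³} |x|⁴ v(x) dx = +∞ (when 2e ≠ b²). -/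
/-!
Write `s = b²|x|²`, so that `v(x) = P(s) / Q(s)` with `P` a cubic and
`Q(s) = (1+s)²(4+s)²((1+s)² - c)`. Since `e/b² ≥ 7/9` all coefficients of `P` are nonnegative,
and since `c ≤ 1` we have `Q(s) ≥ s(1+s)⁵`. Hence `s v ≲ (1+s)⁻²`: `v` has at worst an
`|x|⁻²` singularity at the origin and decays like `|x|⁻⁶`, so in polar coordinates
`r²(1+r²)v(r) ≲ (1+r²)⁻¹`, which is integrable on `(0, ∞)`. Conversely the leading coefficient
`2e - b²` of `P` is positive and `Q(s) ≤ 400 s⁶` for `s ≥ 1`, so `r⁶ v(r)` is bounded below by a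
positive constant at infinity and `r² · r⁴ v(r)` is not integrable on `(0, ∞)`.
-/

open MeasureTheory Real Set

lemma lintegral_ofReal_eq_top_of_not_integrable {α : Type*} [MeasurableSpace α] {μ : Measure α}
    {f : α → ℝ} (hfm : AEStronglyMeasurable f μ) (hf : 0 ≤ᵐ[μ] f) (hint : ¬ Integrable f μ) :
    ∫⁻ a, ENNReal.ofReal (f a) ∂μ = ⊤ :=
  not_not.1 (mt (lintegral_ofReal_ne_top_iff_integrable hfm hf).1 hint)

lemma not_integrableOn_Ioi_of_forall_le {f : ℝ → ℝ} {a k : ℝ} (hk : 0 < k)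
    (hf : ∀ r ∈ Ioi a, k ≤ f r) : ¬ IntegrableOn f (Ioi a) := fun hint => by
  have hconst : IntegrableOn (fun _ => k) (Ioi a) :=
    hint.mono' aestronglyMeasurable_const <| ae_restrict_of_forall_mem measurableSet_Ioi
      fun r hr => (norm_of_nonneg hk.le).trans_le (hf r hr)
  simp [integrableOn_const_iff, hk.ne'] at hconst

namespace ExplicitPotential

def numer (e β c s : ℝ) : ℝ :=
  12 * c * (s ^ 3 * (2 * e - β) + s ^ 2 * (9 * e - 7 * β) + 4 * s * (3 * e - 2 * β)
    + (5 * e + 16 * β))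

def denom (c s : ℝ) : ℝ := (1 + s) ^ 2 * (4 + s) ^ 2 * ((1 + s) ^ 2 - c)

noncomputable def profile (e β c s : ℝ) : ℝ := numer e β c s / denom c s

section Estimates

variable {e β c s : ℝ}

lemma numer_nonneg (hβ : 0 ≤ β) (he : 7 / 9 * β ≤ e) (hc : 0 ≤ c) (hs : 0 ≤ s) :
    0 ≤ numer e β c s := by
  have h3 : 0 ≤ s ^ 3 * (2 * e - β) := mul_nonneg (by positivity) (by linarith)
  have h2 : 0 ≤ s ^ 2 * (9 * e - 7 * β) := mul_nonneg (by positivity) (by linarith)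
  have h1 : 0 ≤ 4 * s * (3 * e - 2 * β) := mul_nonneg (by positivity) (by linarith)
  exact mul_nonneg (by positivity) (by linarith)

lemma numer_le (hβ : 0 ≤ β) (he : 7 / 9 * β ≤ e) (hc1 : c ≤ 1) (hs : 0 ≤ s) :
    numer e β c s ≤ 12 * (28 * e + 16 * β) * (1 + s) ^ 3 := by
  have h3 : s ^ 3 ≤ (1 + s) ^ 3 := by gcongr; linarith
  have h2 : s ^ 2 ≤ (1 + s) ^ 3 := by nlinarith
  have h1 : s ≤ (1 + s) ^ 3 := by nlinarith
  have h0 : 1 ≤ (1 + s) ^ 3 := one_le_pow₀ (by linarith)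
  have hp : 0 ≤ s ^ 3 * (2 * e - β) + s ^ 2 * (9 * e - 7 * β) + 4 * s * (3 * e - 2 * β)
      + (5 * e + 16 * β) := by
    simpa [numer] using numer_nonneg (c := 1) hβ he zero_le_one hs
  unfold numer
  nlinarith [mul_le_mul_of_nonneg_right h3 (by linarith : 0 ≤ 2 * e),
    mul_le_mul_of_nonneg_right h2 (by linarith : 0 ≤ 9 * e),
    mul_le_mul_of_nonneg_right h1 (by linarith : 0 ≤ 12 * e),
    mul_le_mul_of_nonneg_right h0 (by linarith : 0 ≤ 5 * e + 16 * β)]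

lemma mul_pow_five_le_denom (hc1 : c ≤ 1) (hs : 0 ≤ s) : s * (1 + s) ^ 5 ≤ denom c s := by
  have h : s * (1 + s) ≤ (1 + s) ^ 2 - c := by nlinarith
  calc s * (1 + s) ^ 5 = (1 + s) ^ 2 * (1 + s) ^ 2 * (s * (1 + s)) := by ring
    _ ≤ (1 + s) ^ 2 * (4 + s) ^ 2 * ((1 + s) ^ 2 - c) := by gcongr; linarith

lemma denom_le (hc : 0 ≤ c) (hc1 : c ≤ 1) (hs : 1 ≤ s) : denom c s ≤ 400 * s ^ 6 := by
  calc denom c s ≤ (2 * s) ^ 2 * (5 * s) ^ 2 * (2 * s) ^ 2 := by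
        unfold denom
        gcongr
        · nlinarith
        · linarith
        · linarith
        · nlinarith
    _ = 400 * s ^ 6 := by ring

lemma profile_nonneg (hβ : 0 ≤ β) (he : 7 / 9 * β ≤ e) (hc : 0 ≤ c) (hc1 : c ≤ 1)
    (hs : 0 ≤ s) : 0 ≤ profile e β c s :=
  div_nonneg (numer_nonneg hβ he hc hs) ((by positivity : 0 ≤ s * (1 + s) ^ 5).trans
    (mul_pow_five_le_denom hc1 hs))

lemma mul_profile_le (hβ : 0 ≤ β) (he : 7 / 9 * β ≤ e) (hc1 : c ≤ 1) (hs : 0 < s) :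
    s * profile e β c s ≤ 12 * (28 * e + 16 * β) / (1 + s) ^ 2 := by
  have hD := mul_pow_five_le_denom hc1 hs.le
  have hDpos : 0 < denom c s := (by positivity : 0 < s * (1 + s) ^ 5).trans_le hD
  rw [profile, mul_div_assoc', div_le_div_iff₀ hDpos (by positivity)]
  have hA : 0 ≤ 12 * (28 * e + 16 * β) := by linarith
  calc s * numer e β c s * (1 + s) ^ 2
      ≤ s * (12 * (28 * e + 16 * β) * (1 + s) ^ 3) * (1 + s) ^ 2 := by
        gcongr
        exact numer_le hβ he hc1 hs.le
    _ = 12 * (28 * e + 16 * β) * (s * (1 + s) ^ 5) := by ring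
    _ ≤ 12 * (28 * e + 16 * β) * denom c s := by gcongr

lemma profile_lower (hβ : 0 ≤ β) (he : 7 / 9 * β ≤ e) (hc : 0 ≤ c) (hc1 : c ≤ 1)
    (hs : 1 ≤ s) : 12 * c * (2 * e - β) / 400 ≤ s ^ 3 * profile e β c s := by
  have hDpos : 0 < denom c s :=
    (by positivity : 0 < s * (1 + s) ^ 5).trans_le (mul_pow_five_le_denom hc1 (by linarith))
  have hN : 12 * c * (2 * e - β) * s ^ 3 ≤ numer e β c s := by
    have h2 : 0 ≤ s ^ 2 * (9 * e - 7 * β) := mul_nonneg (by positivity) (by linarith)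
    have h1 : 0 ≤ 4 * s * (3 * e - 2 * β) := mul_nonneg (by positivity) (by linarith)
    unfold numer
    nlinarith [mul_nonneg hc (add_nonneg h2 h1)]
  rw [profile, mul_div_assoc', le_div_iff₀ hDpos]
  calc 12 * c * (2 * e - β) / 400 * denom c s
      ≤ 12 * c * (2 * e - β) / 400 * (400 * s ^ 6) := by
        have : 0 ≤ 2 * e - β := by linarith
        gcongr
        exact denom_le hc hc1 hs
    _ = s ^ 3 * (12 * c * (2 * e - β) * s ^ 3) := by ring
    _ ≤ s ^ 3 * numer e β c s := by gcongr

end Estimates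

@[fun_prop]
lemma measurable_profile (e β c : ℝ) : Measurable (profile e β c) := by
  unfold profile numer denom
  fun_prop

section Radial

variable {e β c : ℝ}

lemma integrableOn_radial_one_add_sq (hβ : 0 < β) (he : 7 / 9 * β ≤ e) (hc : 0 ≤ c)
    (hc1 : c ≤ 1) :
    IntegrableOn (fun r => r ^ 2 * ((1 + r ^ 2) * profile e β c (β * r ^ 2))) (Ioi 0) := by
  set A := 12 * (28 * e + 16 * β)
  set m := 1 + β⁻¹
  have hA : 0 ≤ A := by linarith
  refine (integrable_inv_one_add_sq.const_mul (A * m ^ 2 / β)).integrableOn.mono'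
    (by fun_prop : Measurable _).aestronglyMeasurable ?_
  filter_upwards [ae_restrict_mem measurableSet_Ioi] with r (hr : 0 < r)
  set s := β * r ^ 2
  have hs : 0 < s := by positivity
  have hP := mul_profile_le hβ.le he hc1 hs
  have hm : 1 + r ^ 2 ≤ m * (1 + s) := by
    have : m * (1 + s) = 1 + r ^ 2 + β * r ^ 2 + β⁻¹ := by simp only [m, s]; field_simp; ring
    rw [this]
    have : 0 ≤ β * r ^ 2 + β⁻¹ := by positivity
    linarith
  rw [norm_of_nonneg (by have := profile_nonneg hβ.le he hc hc1 hs.le; positivity),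
    le_mul_inv_iff₀ (by positivity)]
  calc r ^ 2 * ((1 + r ^ 2) * profile e β c s) * (1 + r ^ 2)
      = s * profile e β c s * (1 + r ^ 2) ^ 2 / β := by simp only [s]; field_simp
    _ ≤ A / (1 + s) ^ 2 * (m * (1 + s)) ^ 2 / β := by gcongr
    _ = A * m ^ 2 / β := by field_simp

lemma not_integrableOn_radial_pow_four (hβ : 0 < β) (he : 7 / 9 * β ≤ e) (hc : 0 < c)
    (hc1 : c ≤ 1) :
    ¬ IntegrableOn (fun r => r ^ 2 * (r ^ 4 * profile e β c (β * r ^ 2))) (Ioi 0) := by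
  set k := 12 * c * (2 * e - β) / 400
  have hk : 0 < k := by
    have : 0 < 2 * e - β := by linarith
    positivity
  intro hint
  refine not_integrableOn_Ioi_of_forall_le (a := 1 + β⁻¹) (k := k / β ^ 3) (by positivity)
    (fun r (hr : 1 + β⁻¹ < r) => ?_) (hint.mono_set (Ioi_subset_Ioi (by positivity)))
  have hr1 : 1 < r := by linarith [inv_pos.2 hβ]
  have hβr : 1 < β * r := by
    rw [← inv_lt_iff_one_lt_mul₀' hβ]
    linarith
  have hs : 1 ≤ β * r ^ 2 := by nlinarith
  calc k / β ^ 3 ≤ (β * r ^ 2) ^ 3 * profile e β c (β * r ^ 2) / β ^ 3 := by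
        gcongr
        exact profile_lower hβ.le he hc.le hc1 hs
    _ = r ^ 2 * (r ^ 4 * profile e β c (β * r ^ 2)) := by field_simp

end Radial

end ExplicitPotential

open ExplicitPotential in
theorem stmt_6_general (e b c : ℝ) (hb : 0 < b) (hc : 0 < c)
    (heb : 7 / 9 ≤ e / b ^ 2) (hc1 : c ≤ 1)
    (v : EuclideanSpace ℝ (Fin 3) → ℝ)
    (hv : ∀ x, v x = 12 * c * (b ^ 6 * ‖x‖ ^ 6 * (2 * e - b ^ 2)
          + b ^ 4 * ‖x‖ ^ 4 * (9 * e - 7 * b ^ 2)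
          + 4 * b ^ 2 * ‖x‖ ^ 2 * (3 * e - 2 * b ^ 2)
          + (5 * e + 16 * b ^ 2))
        / ((1 + b ^ 2 * ‖x‖ ^ 2) ^ 2 * (4 + b ^ 2 * ‖x‖ ^ 2) ^ 2
            * ((1 + b ^ 2 * ‖x‖ ^ 2) ^ 2 - c))) :
    Integrable (fun x => (1 + ‖x‖ ^ 2) * v x)
      ∧ (2 * e ≠ b ^ 2 →
          ∫⁻ x, ENNReal.ofReal (‖x‖ ^ 4 * v x) = ⊤) := by
  have hβ : 0 < b ^ 2 := by positivity
  have he : 7 / 9 * b ^ 2 ≤ e := (le_div_iff₀ hβ).1 heb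
  have hv' : ∀ x, v x = profile e (b ^ 2) c (b ^ 2 * ‖x‖ ^ 2) := fun x => by
    rw [hv, profile, numer, denom]
    ring
  have hdim : Module.finrank ℝ (EuclideanSpace ℝ (Fin 3)) = 3 := finrank_euclideanSpace_fin
  simp only [hv']
  refine ⟨?_, fun _ => ?_⟩
  · rw [integrable_fun_norm_addHaar volume
      (f := fun r => (1 + r ^ 2) * profile e (b ^ 2) c (b ^ 2 * r ^ 2)), hdim]
    simpa only [smul_eq_mul] using integrableOn_radial_one_add_sq hβ he hc.le hc1
  · refine lintegral_ofReal_eq_top_of_not_integrable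
      (by fun_prop : Measurable _).aestronglyMeasurable ?_ ?_
    · refine ae_of_all _ fun x => ?_
      have := profile_nonneg hβ.le he hc.le hc1 (by positivity : 0 ≤ b ^ 2 * ‖x‖ ^ 2)
      simp only [Pi.zero_apply]
      positivity
    · rw [integrable_fun_norm_addHaar volume
        (f := fun r => r ^ 4 * profile e (b ^ 2) c (b ^ 2 * r ^ 2)), hdim]
      simpa only [smul_eq_mul] using not_integrableOn_radial_pow_four hβ he hc hc1

theorem stmt_6 (e b c : ℝ) (he : 0 < e) (hb : 0 < b) (hc : 0 < c)
    (heb : 7 / 9 ≤ e / b ^ 2) (hc1 : c ≤ 1)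
    (v : EuclideanSpace ℝ (Fin 3) → ℝ)
    (hv : ∀ x, v x = 12 * c * (b ^ 6 * ‖x‖ ^ 6 * (2 * e - b ^ 2)
          + b ^ 4 * ‖x‖ ^ 4 * (9 * e - 7 * b ^ 2)
          + 4 * b ^ 2 * ‖x‖ ^ 2 * (3 * e - 2 * b ^ 2)
          + (5 * e + 16 * b ^ 2))
        / ((1 + b ^ 2 * ‖x‖ ^ 2) ^ 2 * (4 + b ^ 2 * ‖x‖ ^ 2) ^ 2
            * ((1 + b ^ 2 * ‖x‖ ^ 2) ^ 2 - c))) :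
    Integrable (fun x => (1 + ‖x‖ ^ 2) * v x)
      ∧ (2 * e ≠ b ^ 2 →
          ∫⁻ x, ENNReal.ofReal (‖x‖ ^ 4 * v x) = ⊤) :=
  stmt_6_general e b c hb hc heb hc1 v hv
end
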